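/- Every PBRAG trajectory converges to an equilibrium weight: for any PBRAG trajectory W there exists a matrix W̄ with all entries in [0,1] that is a fixed point of the PBRAG map, such that for all agents i and tasks q, W t i q → W̄ i q as t → ∞. -/

import Mathlib

open Finset Filter

noncomputable def fsMax (s : Finset ℝ) : ℝ := WithBot.unbotD 0 s.max

noncomputable def fsMin (s : Finset ℝ) : ℝ := WithTop.untopD 0 s.min

noncomputable def fsSubmax (s : Finset ℝ) : ℝ := fsMax (s.filter (fun x => x < fsMax s))

/-- Agent `i` is dominating for task `q`. -/
def Dominating {n m : ℕ} (f : Fin n → Fin m → ℝ) (i : Fin n) (q : Fin m) : Prop :=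
  ∀ j, f j q ≤ f i q

/-- Maximum of `g j` over all `j ≠ i` (0 if that set is empty). -/
noncomputable def maxErase {n : ℕ} (i : Fin n) (g : Fin n → ℝ) : ℝ :=
  fsMax ((Finset.univ.erase i).image g)

/-- Utility of agent `i` in the weight game. -/
noncomputable def Uutil {n m : ℕ} (f : Fin n → Fin m → ℝ) (w : Fin n → Fin m → ℝ)
    (i : Fin n) : ℝ :=
  ∑ q, (f i q * w i q - maxErase i (fun j => f j q * w j q) * w i q)

/-- All entries of the matrix lie in `[0,1]`. -/
def InUnit {n m : ℕ} (w : Fin n → Fin m → ℝ) : Prop :=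
  ∀ i q, w i q ∈ Set.Icc (0 : ℝ) 1

/-- Nash equilibrium of the weight game. -/
def IsNashW {n m : ℕ} (f : Fin n → Fin m → ℝ) (w : Fin n → Fin m → ℝ) : Prop :=
  ∀ i, ∀ w' : Fin m → ℝ, (∀ q, w' q ∈ Set.Icc (0 : ℝ) 1) →
    Uutil f (Function.update w i w') i ≤ Uutil f w i

noncomputable def clamp (x : ℝ) : ℝ := max 0 (min x 1)

/-- One step of the projected best-response ascending gradient dynamics. -/
noncomputable def pbrag {n m : ℕ} (f γ : Fin n → Fin m → ℝ)
    (w : Fin n → Fin m → ℝ) : Fin n → Fin m → ℝ :=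
  fun i q => clamp (w i q + γ i q * (f i q - maxErase i (fun j => f j q * w j q)))

/-!
Tasks do not interact, so fix a task. A dominating agent's weight never decreases, because no
opponent's weighted reward exceeds its own reward; being bounded, it converges. If no dominating
agent's weight tended to `1`, all weighted rewards would stay below the top reward by a fixed
margin, and that margin would push a dominating weight up by a fixed amount at every step, all
the way to `1`. So some dominating agent's weight tends to `1`; from then on it outbids every
non-dominating agent by a fixed margin, and their weights drop to `0` in finitely many steps.
The limit is a fixed point because the PBRAG map is continuous.
-/

open Topology

lemma clamp_mem_Icc (x : ℝ) : clamp x ∈ Set.Icc (0 : ℝ) 1 :=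
  ⟨le_max_left _ _, max_le zero_le_one (min_le_right _ _)⟩

lemma clamp_eq_self {x : ℝ} (h : x ∈ Set.Icc (0 : ℝ) 1) : clamp x = x := by
  rw [clamp, min_eq_left h.2, max_eq_right h.1]

lemma monotone_clamp : Monotone clamp :=
  fun _ _ h => max_le_max le_rfl (min_le_min_right 1 h)

lemma continuous_clamp : Continuous clamp := by
  unfold clamp; fun_prop

lemma clamp_le_max_zero (x : ℝ) : clamp x ≤ max 0 x :=
  max_le_max le_rfl (min_le_left _ _)

lemma clamp_one_sub (x : ℝ) : clamp (1 - x) = 1 - clamp x := by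
  unfold clamp; grind

theorem tendsto_zero_of_le_clamp_sub {x : ℕ → ℝ} {δ : ℝ} (hx : ∀ t, 0 ≤ x t) (hδ : 0 < δ)
    (h : ∀ᶠ t in atTop, x (t + 1) ≤ clamp (x t - δ)) : Tendsto x atTop (𝓝 0) := by
  obtain ⟨T, hT⟩ := eventually_atTop.1 h
  have hdecay : ∀ k : ℕ, x (T + k) ≤ max 0 (x T - k * δ) := by
    intro k
    induction k with
    | zero => simp
    | succ k ih =>
      calc x (T + (k + 1)) ≤ max 0 (x (T + k) - δ) :=
            (hT _ (Nat.le_add_right T k)).trans (clamp_le_max_zero _)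
        _ ≤ max 0 (max 0 (x T - k * δ) - δ) := max_le_max le_rfl (by linarith)
        _ ≤ max 0 (x T - (k + 1 : ℕ) * δ) := by
          push_cast
          refine max_le (le_max_left _ _) ?_
          rcases le_total (x T - k * δ) 0 with hk | hk
          · rw [max_eq_left hk]; exact le_max_of_le_left (by linarith)
          · rw [max_eq_right hk]; exact le_max_of_le_right (by linarith)
  obtain ⟨K, hK⟩ := exists_nat_gt (x T / δ)
  refine tendsto_const_nhds.congr' (eventually_atTop.2 ⟨T + K, fun t ht => ?_⟩)
  obtain ⟨k, rfl⟩ := Nat.exists_eq_add_of_le ht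
  have hneg : x T - (K + k : ℕ) * δ ≤ 0 := by
    have := (div_lt_iff₀ hδ).1 hK
    push_cast; nlinarith [(Nat.cast_nonneg k : (0 : ℝ) ≤ k)]
  have := hdecay (K + k)
  rw [max_eq_left hneg, ← add_assoc] at this
  exact le_antisymm (hx _) this

theorem tendsto_one_of_clamp_add_le {x : ℕ → ℝ} {δ : ℝ} (hx : ∀ t, x t ≤ 1) (hδ : 0 < δ)
    (h : ∀ᶠ t in atTop, clamp (x t + δ) ≤ x (t + 1)) : Tendsto x atTop (𝓝 1) := by
  have h0 : Tendsto (fun t => 1 - x t) atTop (𝓝 0) := by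
    refine tendsto_zero_of_le_clamp_sub (fun t => sub_nonneg.2 (hx t)) hδ (h.mono fun t ht => ?_)
    rw [sub_sub, clamp_one_sub]
    linarith
  simpa using h0.const_sub 1

lemma le_maxErase {n : ℕ} {i j : Fin n} (hji : j ≠ i) (g : Fin n → ℝ) : g j ≤ maxErase i g := by
  have hmem : g j ∈ (univ.erase i).image g := mem_image_of_mem g (mem_erase.2 ⟨hji, mem_univ j⟩)
  rw [maxErase, fsMax, ← coe_max' ⟨_, hmem⟩, WithBot.unbotD_coe]
  exact le_max' _ _ hmem

lemma maxErase_le {n : ℕ} {i : Fin n} {g : Fin n → ℝ} {c : ℝ} (hc : 0 ≤ c)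
    (h : ∀ j, j ≠ i → g j ≤ c) : maxErase i g ≤ c := by
  rw [maxErase, fsMax]
  rcases ((univ.erase i).image g).eq_empty_or_nonempty with hempty | hne
  · simpa [hempty] using hc
  · rw [← coe_max' hne, WithBot.unbotD_coe]
    exact max'_le _ _ _ (forall_mem_image.2 fun j hj => h j (ne_of_mem_erase hj))

lemma continuous_maxErase {n : ℕ} (i : Fin n) : Continuous (maxErase i) := by
  rcases (univ.erase i).eq_empty_or_nonempty with hempty | hne
  · have : maxErase i = fun _ => 0 := by
      funext g; simp [maxErase, fsMax, hempty]
    rw [this]; exact continuous_const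
  · have : maxErase i = fun g => (univ.erase i).sup' hne g := by
      funext g
      rw [maxErase, fsMax, ← coe_max' (hne.image g), max'_eq_sup', sup'_image]
      rfl
    rw [this]; exact Continuous.finset_sup'_apply hne fun j _ => continuous_apply j

lemma pbrag_apply {n m : ℕ} (f γ w : Fin n → Fin m → ℝ) (i : Fin n) (q : Fin m) :
    pbrag f γ w i q = clamp (w i q + γ i q * (f i q - maxErase i (fun j => f j q * w j q))) :=
  rfl

lemma continuous_pbrag {n m : ℕ} (f γ : Fin n → Fin m → ℝ) : Continuous (pbrag f γ) := by
  refine continuous_pi fun i => continuous_pi fun q => continuous_clamp.comp ?_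
  have hmax : Continuous fun w : Fin n → Fin m → ℝ => maxErase i (fun j => f j q * w j q) :=
    (continuous_maxErase i).comp (continuous_pi fun j => by fun_prop)
  fun_prop

section Trajectory

variable {n m : ℕ} {f γ : Fin n → Fin m → ℝ} {W : ℕ → Fin n → Fin m → ℝ}

lemma inUnit_trajectory (hW0 : InUnit (W 0)) (hWs : ∀ t, W (t + 1) = pbrag f γ (W t)) :
    ∀ t, InUnit (W t)
  | 0 => hW0
  | t + 1 => hWs t ▸ fun _ _ => clamp_mem_Icc _

lemma bddAbove_range_trajectory (hW0 : InUnit (W 0)) (hWs : ∀ t, W (t + 1) = pbrag f γ (W t))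
    (i : Fin n) (q : Fin m) : BddAbove (Set.range fun t => W t i q) :=
  ⟨1, by rintro _ ⟨t, rfl⟩; exact (inUnit_trajectory hW0 hWs t i q).2⟩

lemma lt_of_not_dominating {i k : Fin n} {q : Fin m} (hi : ¬ Dominating f i q)
    (hk : Dominating f k q) : f i q < f k q := by
  obtain ⟨j, hj⟩ := not_forall.1 hi
  exact (not_le.1 hj).trans_le (hk j)

lemma maxErase_le_of_dominating (hf : ∀ i q, 0 ≤ f i q) {w : Fin n → Fin m → ℝ} (hw : InUnit w)
    {k : Fin n} {q : Fin m} (hk : Dominating f k q) (i : Fin n) :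
    maxErase i (fun j => f j q * w j q) ≤ f k q :=
  maxErase_le (hf k q) fun j _ => (mul_le_of_le_one_right (hf j q) (hw j q).2).trans (hk j)

lemma monotone_of_dominating (hf : ∀ i q, 0 ≤ f i q) (hγ : ∀ i q, 0 < γ i q)
    (hW0 : InUnit (W 0)) (hWs : ∀ t, W (t + 1) = pbrag f γ (W t)) {k : Fin n} {q : Fin m}
    (hk : Dominating f k q) : Monotone fun t => W t k q := by
  refine monotone_nat_of_le_succ fun t => ?_
  have hunit := inUnit_trajectory hW0 hWs t
  have hgain := sub_nonneg.2 (maxErase_le_of_dominating hf hunit hk k)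
  rw [hWs, pbrag_apply]
  calc W t k q = clamp (W t k q) := (clamp_eq_self (hunit k q)).symm
    _ ≤ _ := monotone_clamp (le_add_of_nonneg_right (mul_nonneg (hγ k q).le hgain))

lemma exists_dominating_tendsto_one (hf : ∀ i q, 0 ≤ f i q) (hγ : ∀ i q, 0 < γ i q)
    (hW0 : InUnit (W 0)) (hWs : ∀ t, W (t + 1) = pbrag f γ (W t)) {j : Fin n} {q : Fin m}
    (hj : ¬ Dominating f j q) :
    ∃ k, Dominating f k q ∧ Tendsto (fun t => W t k q) atTop (𝓝 1) := by
  have : Nonempty (Fin n) := ⟨j⟩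
  obtain ⟨k, hk⟩ := Finite.exists_max fun i => f i q
  by_contra! hcon
  have hunit := inUnit_trajectory hW0 hWs
  -- the limit for dominating agents, merely an upper bound for the others
  set ℓ : Fin n → ℝ := fun i => ⨆ t, W t i q
  have hle_ℓ : ∀ t i, W t i q ≤ ℓ i := fun t i =>
    le_ciSup (bddAbove_range_trajectory hW0 hWs i q) t
  have hℓ_le_one : ∀ i, ℓ i ≤ 1 := fun i => ciSup_le fun t => (hunit t i q).2
  have hℓ_lt_one : ∀ i, Dominating f i q → ℓ i < 1 := fun i hi =>
    (hℓ_le_one i).lt_of_ne fun h => hcon i hi <| h ▸ tendsto_atTop_ciSup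
      (monotone_of_dominating hf hγ hW0 hWs hi) (bddAbove_range_trajectory hW0 hWs i q)
  have htop_pos : 0 < f k q := (hf j q).trans_lt (lt_of_not_dominating hj hk)
  have hgap : ∀ i, f i q * ℓ i < f k q := by
    intro i
    by_cases hi : Dominating f i q
    · rw [le_antisymm (hk i) (hi k)]
      exact mul_lt_of_lt_one_right htop_pos (hℓ_lt_one i hi)
    · exact (mul_le_of_le_one_right (hf i q) (hℓ_le_one i)).trans_lt (lt_of_not_dominating hi hk)
  obtain ⟨j₀, hj₀⟩ := Finite.exists_max fun i => f i q * ℓ i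
  have hℓ_nonneg : 0 ≤ ℓ j₀ := (hunit 0 j₀ q).1.trans (hle_ℓ 0 j₀)
  have hpush : ∀ t, clamp (W t k q + γ k q * (f k q - f j₀ q * ℓ j₀)) ≤ W (t + 1) k q := by
    intro t
    have hS : maxErase k (fun i => f i q * W t i q) ≤ f j₀ q * ℓ j₀ :=
      maxErase_le (mul_nonneg (hf j₀ q) hℓ_nonneg) fun i _ =>
        (mul_le_mul_of_nonneg_left (hle_ℓ t i) (hf i q)).trans (hj₀ i)
    have hgain := mul_le_mul_of_nonneg_left (sub_le_sub_left hS (f k q)) (hγ k q).le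
    rw [hWs, pbrag_apply]
    exact monotone_clamp (by linarith)
  exact hcon k hk <| tendsto_one_of_clamp_add_le (fun t => (hunit t k q).2)
    (mul_pos (hγ k q) (sub_pos.2 (hgap j₀))) (Eventually.of_forall hpush)

lemma tendsto_zero_of_not_dominating (hf : ∀ i q, 0 ≤ f i q) (hγ : ∀ i q, 0 < γ i q)
    (hW0 : InUnit (W 0)) (hWs : ∀ t, W (t + 1) = pbrag f γ (W t)) {j : Fin n} {q : Fin m}
    (hj : ¬ Dominating f j q) : Tendsto (fun t => W t j q) atTop (𝓝 0) := by
  obtain ⟨k, hk, hk_one⟩ := exists_dominating_tendsto_one hf hγ hW0 hWs hj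
  have hkj : k ≠ j := by rintro rfl; exact hj hk
  have hmargin : 0 < (f k q - f j q) / 2 := half_pos (sub_pos.2 (lt_of_not_dominating hj hk))
  have houtbid : ∀ᶠ t in atTop, f j q + (f k q - f j q) / 2 < f k q * W t k q := by
    have : Tendsto (fun t => f k q * W t k q) atTop (𝓝 (f k q)) := by
      simpa using hk_one.const_mul (f k q)
    exact this.eventually (lt_mem_nhds (by linarith))
  refine tendsto_zero_of_le_clamp_sub (fun t => (inUnit_trajectory hW0 hWs t j q).1)
    (mul_pos (hγ j q) hmargin) (houtbid.mono fun t ht => ?_)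
  have hS := le_maxErase hkj fun i => f i q * W t i q
  have hloss := mul_le_mul_of_nonneg_left
    (show f j q - maxErase j (fun i => f i q * W t i q) ≤ -((f k q - f j q) / 2) by linarith)
    (hγ j q).le
  rw [hWs, pbrag_apply]
  exact monotone_clamp (by linarith)

lemma exists_tendsto_trajectory (hf : ∀ i q, 0 ≤ f i q) (hγ : ∀ i q, 0 < γ i q)
    (hW0 : InUnit (W 0)) (hWs : ∀ t, W (t + 1) = pbrag f γ (W t)) (i : Fin n) (q : Fin m) :
    ∃ ℓ, Tendsto (fun t => W t i q) atTop (𝓝 ℓ) := by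
  by_cases hi : Dominating f i q
  · exact ⟨_, tendsto_atTop_ciSup (monotone_of_dominating hf hγ hW0 hWs hi)
      (bddAbove_range_trajectory hW0 hWs i q)⟩
  · exact ⟨0, tendsto_zero_of_not_dominating hf hγ hW0 hWs hi⟩

lemma trajectory_eq_iterate (hWs : ∀ t, W (t + 1) = pbrag f γ (W t)) :
    ∀ t, W t = (pbrag f γ)^[t] (W 0)
  | 0 => rfl
  | t + 1 => by rw [hWs, trajectory_eq_iterate hWs t, Function.iterate_succ_apply']

end Trajectory

theorem pbrag_converges_to_equilibrium_general {n m : ℕ} (f : Fin n → Fin m → ℝ)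
    (hf : ∀ i q, 0 ≤ f i q)
    (γ : Fin n → Fin m → ℝ) (hγ : ∀ i q, 0 < γ i q)
    (W : ℕ → Fin n → Fin m → ℝ)
    (hW0 : InUnit (W 0)) (hWs : ∀ t, W (t + 1) = pbrag f γ (W t)) :
    ∃ Wbar : Fin n → Fin m → ℝ, InUnit Wbar ∧ pbrag f γ Wbar = Wbar ∧
      ∀ i q, Tendsto (fun t => W t i q) atTop (nhds (Wbar i q)) := by
  choose Wbar hWbar using exists_tendsto_trajectory hf hγ hW0 hWs
  have hlim : Tendsto (fun t => (pbrag f γ)^[t] (W 0)) atTop (𝓝 Wbar) := by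
    simp only [← trajectory_eq_iterate hWs]
    exact tendsto_pi_nhds.2 fun i => tendsto_pi_nhds.2 (hWbar i)
  refine ⟨Wbar, fun i q => ?_,
    isFixedPt_of_tendsto_iterate hlim (continuous_pbrag f γ).continuousAt, hWbar⟩
  exact isClosed_Icc.mem_of_tendsto (hWbar i q)
    (Eventually.of_forall fun t => inUnit_trajectory hW0 hWs t i q)

theorem pbrag_converges_to_equilibrium {n m : ℕ} (f : Fin n → Fin m → ℝ)
    (hf : ∀ i q, 0 ≤ f i q)
    (hnt : ∀ q : Fin m, ∃ j : Fin n, ¬ Dominating f j q)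
    (γ : Fin n → Fin m → ℝ) (hγ : ∀ i q, 0 < γ i q)
    (W : ℕ → Fin n → Fin m → ℝ)
    (hW0 : InUnit (W 0)) (hWs : ∀ t, W (t + 1) = pbrag f γ (W t)) :
    ∃ Wbar : Fin n → Fin m → ℝ, InUnit Wbar ∧ pbrag f γ Wbar = Wbar ∧
      ∀ i q, Tendsto (fun t => W t i q) atTop (nhds (Wbar i q)) :=
  pbrag_converges_to_equilibrium_general f hf γ hγ W hW0 hWs
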